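/- Let A and B be admissible linear chains, c a positive integer, and let B' be the admissible chain with e(B') = 1 − e(Bᵀ), i.e. B' = B*. Suppose that A ++ [1] ++ B shrinks to [c, 1]. Then n := r(A) − r(B') ≥ 0 and A = ([c] ++ TWₙ) ∗ B'; moreover, if c = 1 then n = 0. -/

import Mathlib

/-- The tridiagonal matrix associated to a linear chain `A = [a₁,…,a_r]`:
diagonal entries `aᵢ`, entries `-1` immediately above/below the diagonal, `0` elsewhere. -/
def chainMatrix (A : List ℤ) : Matrix (Fin A.length) (Fin A.length) ℤ :=
  fun i j =>
    if i = j then A.get i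
    else if (i : ℕ) + 1 = (j : ℕ) ∨ (j : ℕ) + 1 = (i : ℕ) then -1 else 0

/-- The discriminant `d(A)` of a linear chain: the determinant of `chainMatrix A`
(the `0 × 0` determinant being `1` for the empty list). -/
def disc (A : List ℤ) : ℤ := (chainMatrix A).det

/-- A linear chain is admissible if it is nonempty and all of its entries are `≥ 2`. -/
def Admissible (A : List ℤ) : Prop := A ≠ [] ∧ ∀ a ∈ A, 2 ≤ a

/-- The inductance `e(A) = d(A̅)/d(A)` of a linear chain, as a rational number. -/
def inductance (A : List ℤ) : ℚ := (disc A.tail : ℚ) / (disc A : ℚ)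

/-- `TW n`: the list consisting of `n` copies of the integer `2`. -/
def TW (n : ℕ) : List ℤ := List.replicate n 2

/-- The `∗`-product of two (nonempty) integer lists:
`[a₁,…,a_r] ∗ [b₁,…,b_s] = [a₁,…,a_{r−1}, a_r + b₁ − 1, b₂,…,b_s]`. -/
def sprod (A B : List ℤ) : List ℤ :=
  A.dropLast ++ (A.getLast! + B.head! - 1) :: B.tail

/-- Decrease the first entry of a list by `1` (do nothing to the empty list). -/
def decHead : List ℤ → List ℤ
  | [] => []
  | a :: l => (a - 1) :: l

/-- Decrease the last entry of a list by `1` (do nothing to the empty list). -/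
def decLast (l : List ℤ) : List ℤ := (decHead l.reverse).reverse

/-- A single blow-down of an integer list: remove one entry equal to `1` and decrease
by `1` each entry adjacent to it (one entry if the `1` is at an end of the list,
two entries if it is interior). -/
def BlowdownStep (L L' : List ℤ) : Prop :=
  ∃ P S : List ℤ, L = P ++ 1 :: S ∧ L' = decLast P ++ decHead S

/-- `Shrinks A B`: `B` can be obtained from `A` by a finite sequence of single blow-downs. -/
def Shrinks : List ℤ → List ℤ → Prop := Relation.ReflTransGen BlowdownStep

/-!
Write `K(A) = ∏ᵢ !![aᵢ, -1; 1, 0] ∈ SL₂(ℤ)` for the continuant matrix of a chain: its first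
column is `(d(A), d(A̅))` and its first row is `(d(A), -d(A̲))`. Since
`K[a, 1, b] = K[a - 1, b - 1]`, blowing down an interior `1` does not change `K`, while blowing
down an end multiplies `K` by a unipotent matrix on that side. So if `[A, 1, B]` shrinks to
`[c, 1]`, then `K[A, 1, B]` equals `K[c, TWₙ, 1]` up to a lower unipotent factor on the left.

The adjoint condition fixes the first column of `K(B*)`, because its entries are coprime, and the
bound `0 ≤ d(B̲*) < d(B*)` then fixes the whole matrix: `K[B*, 1, B] = K[1, 1]`. As
`K(X ∗ Y) = -K(X) K[1, 1] K(Y)` and `K[1]³ = -1`, it follows that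
`K[([c] ++ TWₙ) ∗ B*, 1, B] = K[c, TWₙ, 1]`. Cancelling `K[1, B]` shows that `A` and
`([c] ++ TWₙ) ∗ B*` have the same first row of `K`, and an admissible chain is determined by that
row (it is the continued fraction expansion of `d(A) / d(A̲)`).
-/

open Matrix

theorem Matrix.det_eq_of_sparse_first_row_col {R : Type*} [CommRing R] {n : ℕ}
    (M : Matrix (Fin (n + 2)) (Fin (n + 2)) R) (hcol : ∀ i : Fin n, M i.succ.succ 0 = 0)
    (hrow : ∀ j : Fin n, M 0 j.succ.succ = 0) :
    M.det = M 0 0 * (M.submatrix Fin.succ Fin.succ).det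
      - M 1 0 * M 0 1 * (M.submatrix (Fin.succ ∘ Fin.succ) (Fin.succ ∘ Fin.succ)).det := by
  have hminor : (M.submatrix (Fin.succAbove 1) Fin.succ).det
      = M 0 1 * (M.submatrix (Fin.succ ∘ Fin.succ) (Fin.succ ∘ Fin.succ)).det := by
    rw [det_succ_row_zero, Fin.sum_univ_succ]
    simp [hrow, submatrix_submatrix, Function.comp_def]
  rw [det_succ_column_zero, Fin.sum_univ_succ, Fin.sum_univ_succ]
  simp only [Fin.coe_ofNat_eq_mod, Nat.zero_mod, pow_zero, one_mul, Fin.succAbove_zero,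
    Fin.succ_zero_eq_one, Nat.one_mod, pow_one, neg_mul, hminor, Fin.val_succ, hcol, mul_zero,
    zero_mul, Finset.sum_const_zero, add_zero]
  ring

lemma chainMatrix_submatrix_succ (a : ℤ) (T : List ℤ) :
    (chainMatrix (a :: T)).submatrix Fin.succ Fin.succ = chainMatrix T := by
  ext i j
  simp [chainMatrix, Fin.succ_inj]

lemma disc_nil : disc [] = 1 := det_fin_zero

lemma disc_singleton (a : ℤ) : disc [a] = a := by
  simp [disc, chainMatrix, det_unique]

lemma disc_cons_cons (a b : ℤ) (T : List ℤ) :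
    disc (a :: b :: T) = a * disc (b :: T) - disc T := by
  rw [disc, det_eq_of_sparse_first_row_col]
  · rw [chainMatrix_submatrix_succ, ← submatrix_submatrix, chainMatrix_submatrix_succ,
      chainMatrix_submatrix_succ]
    simp [chainMatrix, disc]
  · intro i
    simp [chainMatrix, Fin.succ_ne_zero]
  · intro j
    simp [chainMatrix, (Fin.succ_ne_zero _).symm]

def chainStep (a : ℤ) : Matrix (Fin 2) (Fin 2) ℤ := !![a, -1; 1, 0]

def chainProd (L : List ℤ) : Matrix (Fin 2) (Fin 2) ℤ := (L.map chainStep).prod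

@[simp] lemma chainProd_nil : chainProd [] = 1 := rfl

@[simp] lemma chainProd_cons (a : ℤ) (L : List ℤ) :
    chainProd (a :: L) = chainStep a * chainProd L := List.prod_cons

@[simp] lemma chainProd_append (L L' : List ℤ) :
    chainProd (L ++ L') = chainProd L * chainProd L' := by
  simp [chainProd]

lemma chainProd_det (L : List ℤ) : (chainProd L).det = 1 := by
  induction L with
  | nil => simp
  | cons a L ih => rw [chainProd_cons, det_mul, ih]; simp [chainStep]

lemma chainProd_cons_apply_zero (a : ℤ) (L : List ℤ) (j : Fin 2) :
    chainProd (a :: L) 0 j = a * chainProd L 0 j - chainProd L 1 j := by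
  simp [chainStep, mul_apply, Fin.sum_univ_two, sub_eq_add_neg]

lemma chainProd_cons_apply_one (a : ℤ) (L : List ℤ) (j : Fin 2) :
    chainProd (a :: L) 1 j = chainProd L 0 j := by
  simp [chainStep, mul_apply, Fin.sum_univ_two]

lemma chainProd_apply_zero_zero : ∀ L : List ℤ, chainProd L 0 0 = disc L
  | [] => by simp [disc_nil]
  | [a] => by simp [chainProd_cons_apply_zero, disc_singleton]
  | a :: b :: T => by
    rw [chainProd_cons_apply_zero, chainProd_cons_apply_one, disc_cons_cons,
      chainProd_apply_zero_zero (b :: T), chainProd_apply_zero_zero T]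

lemma chainProd_reverse (L : List ℤ) :
    chainProd L.reverse = diagonal ![1, -1] * (chainProd L)ᵀ * diagonal ![1, -1] := by
  set D : Matrix (Fin 2) (Fin 2) ℤ := diagonal ![1, -1]
  have hD : D * D = 1 := by
    rw [diagonal_mul_diagonal, ← diagonal_one]
    congr 1; ext i; fin_cases i <;> simp
  have hstep (a : ℤ) : chainStep a = D * (chainStep a)ᵀ * D := by
    ext i j; fin_cases i <;> fin_cases j <;> simp [D, chainStep]
  induction L with
  | nil => simp [hD]
  | cons a L ih =>
    rw [List.reverse_cons, chainProd_append, ih, chainProd_cons, chainProd_nil, Matrix.mul_one,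
      chainProd_cons, transpose_mul]
    conv_lhs => rw [hstep a]
    simp only [Matrix.mul_assoc]
    rw [← Matrix.mul_assoc D D, hD, Matrix.one_mul]

lemma chainProd_reverse_apply_zero_zero (L : List ℤ) :
    chainProd L.reverse 0 0 = chainProd L 0 0 := by
  simp [chainProd_reverse, mul_apply, Fin.sum_univ_two]

lemma chainProd_reverse_apply_one_zero (L : List ℤ) :
    chainProd L.reverse 1 0 = -chainProd L 0 1 := by
  simp [chainProd_reverse, mul_apply, Fin.sum_univ_two]

lemma inductance_eq {L : List ℤ} (h : L ≠ []) :
    inductance L = chainProd L 1 0 / chainProd L 0 0 := by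
  obtain ⟨a, T, rfl⟩ := List.exists_cons_of_ne_nil h
  rw [inductance, chainProd_cons_apply_one, chainProd_apply_zero_zero, chainProd_apply_zero_zero,
    List.tail_cons]

lemma inductance_reverse_eq {L : List ℤ} (h : L ≠ []) :
    inductance L.reverse = -chainProd L 0 1 / chainProd L 0 0 := by
  rw [inductance_eq (List.reverse_ne_nil_iff.mpr h), chainProd_reverse_apply_one_zero,
    chainProd_reverse_apply_zero_zero, Int.cast_neg]

lemma chainProd_col_bounds {L : List ℤ} (h : ∀ a ∈ L, 2 ≤ a) :
    0 ≤ chainProd L 1 0 ∧ chainProd L 1 0 < chainProd L 0 0 := by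
  induction L with
  | nil => simp
  | cons a L ih =>
    obtain ⟨h0, h1⟩ := ih fun x hx => h x (List.mem_cons_of_mem a hx)
    have ha := h a List.mem_cons_self
    rw [chainProd_cons_apply_zero, chainProd_cons_apply_one]
    constructor <;> nlinarith

lemma chainProd_row_bounds {L : List ℤ} (h : ∀ a ∈ L, 2 ≤ a) :
    -chainProd L 0 0 < chainProd L 0 1 ∧ chainProd L 0 1 ≤ 0 := by
  have := chainProd_col_bounds (L := L.reverse) fun a ha => h a (List.mem_reverse.mp ha)
  rw [chainProd_reverse_apply_zero_zero, chainProd_reverse_apply_one_zero] at this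
  constructor <;> linarith

lemma eq_of_chainProd_col_eq {X Y : List ℤ} (hX : ∀ a ∈ X, 2 ≤ a) (hY : ∀ a ∈ Y, 2 ≤ a)
    (h0 : chainProd X 0 0 = chainProd Y 0 0) (h1 : chainProd X 1 0 = chainProd Y 1 0) :
    X = Y := by
  induction X generalizing Y with
  | nil =>
    cases Y with
    | nil => rfl
    | cons y Y =>
      have := chainProd_col_bounds fun a ha => hY a (List.mem_cons_of_mem y ha)
      rw [chainProd_cons_apply_one, chainProd_nil, one_apply_ne (by decide)] at h1
      omega
  | cons x X ih =>
    cases Y with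
    | nil =>
      have := chainProd_col_bounds fun a ha => hX a (List.mem_cons_of_mem x ha)
      rw [chainProd_cons_apply_one, chainProd_nil, one_apply_ne (by decide)] at h1
      omega
    | cons y Y =>
      have hX' : ∀ a ∈ X, 2 ≤ a := fun a ha => hX a (List.mem_cons_of_mem x ha)
      have hY' : ∀ a ∈ Y, 2 ≤ a := fun a ha => hY a (List.mem_cons_of_mem y ha)
      obtain ⟨hX0, hX1⟩ := chainProd_col_bounds hX'
      obtain ⟨hY0, hY1⟩ := chainProd_col_bounds hY'
      rw [chainProd_cons_apply_one, chainProd_cons_apply_one] at h1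
      rw [chainProd_cons_apply_zero, chainProd_cons_apply_zero, h1] at h0
      have hxy : x = y := by
        by_contra hne
        rcases lt_or_gt_of_ne hne with hlt | hlt <;> nlinarith
      subst hxy
      rw [ih hX' hY' h1 (by linarith)]

lemma eq_of_chainProd_row_eq {X Y : List ℤ} (hX : ∀ a ∈ X, 2 ≤ a) (hY : ∀ a ∈ Y, 2 ≤ a)
    (h : chainProd X 0 = chainProd Y 0) : X = Y := by
  refine List.reverse_injective (eq_of_chainProd_col_eq
    (fun a ha => hX a (List.mem_reverse.mp ha)) (fun a ha => hY a (List.mem_reverse.mp ha)) ?_ ?_)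
  · rw [chainProd_reverse_apply_zero_zero, chainProd_reverse_apply_zero_zero, congrFun h 0]
  · rw [chainProd_reverse_apply_one_zero, chainProd_reverse_apply_one_zero, congrFun h 1]

theorem Matrix.eq_of_det_eq_one_of_col_zero_eq {Z W : Matrix (Fin 2) (Fin 2) ℤ}
    (hZ : Z.det = 1) (hW : W.det = 1) (h0 : Z 0 0 = W 0 0) (h1 : Z 1 0 = W 1 0)
    (hZ01 : -Z 0 0 < Z 0 1 ∧ Z 0 1 ≤ 0) (hW01 : -W 0 0 < W 0 1 ∧ W 0 1 ≤ 0) : Z = W := by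
  rw [det_fin_two] at hZ hW
  rw [← h0, ← h1] at hW
  have hcop : IsCoprime (Z 0 0) (Z 1 0) := ⟨Z 1 1, -Z 0 1, by linarith⟩
  have hdvd : Z 0 0 ∣ Z 0 1 - W 0 1 :=
    hcop.dvd_of_dvd_mul_left ⟨Z 1 1 - W 1 1, by linear_combination hW - hZ⟩
  have h01 : Z 0 1 = W 0 1 := by
    have := Int.eq_zero_of_abs_lt_dvd hdvd (by rw [abs_lt]; constructor <;> linarith)
    linarith
  have h11 : Z 1 1 = W 1 1 :=
    mul_left_cancel₀ (show Z 0 0 ≠ 0 by linarith) (by rw [h01] at hZ; linarith)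
  rw [eta_fin_two Z, eta_fin_two W, h0, h1, h01, h11]

lemma isCoprime_chainProd_col (L : List ℤ) : IsCoprime (chainProd L 1 0) (chainProd L 0 0) := by
  have h := chainProd_det L
  rw [det_fin_two] at h
  exact ⟨-chainProd L 0 1, chainProd L 1 1, by linarith⟩

lemma chainProd_append_one_append_of_adjoint {B B' : List ℤ} (hB : Admissible B)
    (hB' : Admissible B') (hadj : inductance B' = 1 - inductance B.reverse) :
    chainProd (B' ++ 1 :: B) = chainProd [1, 1] := by
  obtain ⟨p, q, r, s, hY⟩ : ∃ p q r s, chainProd B = !![p, q; r, s] := ⟨_, _, _, _, eta_fin_two _⟩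
  have hdet : p * s - q * r = 1 := by rw [← det_fin_two_of, ← hY, chainProd_det]
  have hr : 0 < r := by
    obtain ⟨b, T, rfl⟩ := List.exists_cons_of_ne_nil hB.1
    have := chainProd_col_bounds (L := T) fun a ha => hB.2 a (List.mem_cons_of_mem b ha)
    have hT : chainProd T 0 0 = r := by rw [← chainProd_cons_apply_one b, hY]; rfl
    linarith
  have hrp : r < p := by simpa [hY] using (chainProd_col_bounds hB.2).2
  have hcol : chainProd B' 1 0 = p + q ∧ chainProd B' 0 0 = p := by
    refine Rat.div_int_inj (by linarith [chainProd_col_bounds hB'.2]) (by linarith) ?_ ?_ ?_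
    · exact Int.isCoprime_iff_gcd_eq_one.mp (isCoprime_chainProd_col B')
    · exact Int.isCoprime_iff_gcd_eq_one.mp ⟨-r, s + r, by linear_combination hdet⟩
    · have hp : (p : ℚ) ≠ 0 := by exact_mod_cast (show p ≠ 0 by omega)
      rw [← inductance_eq hB'.1, hadj, inductance_reverse_eq hB.1, hY]
      simp only [of_apply, cons_val', cons_val_zero, cons_val_one, empty_val', cons_val_fin_one]
      field_simp
      push_cast
      ring
  have hB'W : chainProd B' = !![p, r - p; p + q, s + r - q - p] := by
    refine eq_of_det_eq_one_of_col_zero_eq (chainProd_det B') ?_ hcol.2 hcol.1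
      (chainProd_row_bounds hB'.2) ?_
    · rw [det_fin_two_of]; linear_combination hdet
    · simp only [of_apply, cons_val', cons_val_zero, cons_val_one, empty_val', cons_val_fin_one]
      constructor <;> linarith
  rw [chainProd_append, chainProd_cons, hB'W, hY]
  simp only [chainProd_cons, chainProd_nil, Matrix.mul_one, chainStep, mul_fin_two,
    EmbeddingLike.apply_eq_iff_eq, vecCons_inj, and_true]
  exact ⟨⟨by ring, by linear_combination -hdet⟩, by linear_combination hdet,
    by linear_combination -hdet⟩

lemma transvection_one_zero (c : ℤ) : transvection (1 : Fin 2) 0 c = !![1, 0; c, 1] := by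
  ext i j; fin_cases i <;> fin_cases j <;> simp [transvection]

lemma transvection_zero_one (c : ℤ) : transvection (0 : Fin 2) 1 c = !![1, c; 0, 1] := by
  ext i j; fin_cases i <;> fin_cases j <;> simp [transvection]

lemma chainStep_one : chainStep 1 = transvection 1 0 1 * transvection 0 1 (-1) := by
  simp [chainStep, transvection_one_zero, transvection_zero_one]

lemma decLast_append_singleton (P : List ℤ) (a : ℤ) : decLast (P ++ [a]) = P ++ [a - 1] := by
  simp [decLast, decHead]

lemma exists_chainProd_mul_transvection (P : List ℤ) :
    ∃ m : ℤ, chainProd P * transvection 1 0 1 = transvection 1 0 m * chainProd (decLast P) := by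
  rcases List.eq_nil_or_concat' P with rfl | ⟨P, p, rfl⟩
  · exact ⟨1, by simp [decLast, decHead]⟩
  · refine ⟨0, ?_⟩
    rw [decLast_append_singleton, chainProd_append, chainProd_append, Matrix.mul_assoc]
    simp [chainStep, transvection_one_zero, sub_eq_add_neg]

lemma exists_transvection_mul_chainProd (S : List ℤ) :
    ∃ n : ℕ, transvection 0 1 (-1) * chainProd S
      = chainProd (decHead S) * transvection 0 1 (-(n : ℤ)) := by
  cases S with
  | nil => exact ⟨1, by simp [decHead]⟩
  | cons s S =>
    refine ⟨0, ?_⟩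
    rw [decHead, chainProd_cons, chainProd_cons, ← Matrix.mul_assoc]
    simp [chainStep, transvection_zero_one, sub_eq_add_neg]

lemma BlowdownStep.exists_chainProd_eq {L L' : List ℤ} (h : BlowdownStep L L') :
    ∃ (m : ℤ) (n : ℕ),
      chainProd L = transvection 1 0 m * chainProd L' * transvection 0 1 (-(n : ℤ)) := by
  obtain ⟨P, S, rfl, rfl⟩ := h
  obtain ⟨m, hm⟩ := exists_chainProd_mul_transvection P
  obtain ⟨n, hn⟩ := exists_transvection_mul_chainProd S
  refine ⟨m, n, ?_⟩
  rw [chainProd_append, chainProd_cons, chainStep_one, chainProd_append]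
  calc chainProd P * (transvection 1 0 1 * transvection 0 1 (-1) * chainProd S)
      = chainProd P * transvection 1 0 1 * (transvection 0 1 (-1) * chainProd S) := by
        simp only [Matrix.mul_assoc]
    _ = _ := by rw [hm, hn]; simp only [Matrix.mul_assoc]

lemma Shrinks.exists_chainProd_eq {L L' : List ℤ} (h : Shrinks L L') :
    ∃ (m : ℤ) (n : ℕ),
      chainProd L = transvection 1 0 m * chainProd L' * transvection 0 1 (-(n : ℤ)) := by
  induction h with
  | refl => exact ⟨0, 0, by simp⟩
  | tail _ hstep ih =>
    obtain ⟨m, n, h⟩ := ih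
    obtain ⟨m', n', h'⟩ := hstep.exists_chainProd_eq
    refine ⟨m + m', n' + n, ?_⟩
    rw [h, h', Nat.cast_add, neg_add, ← transvection_mul_transvection_same 1 0 (by decide) m m',
      ← transvection_mul_transvection_same 0 1 (by decide)]
    simp only [Matrix.mul_assoc]

lemma TW_succ (n : ℕ) : TW (n + 1) = 2 :: TW n := rfl

lemma chainProd_TW_append_one (n : ℕ) :
    chainProd (TW n ++ [1]) = chainStep 1 * transvection 0 1 (-(n : ℤ)) := by
  induction n with
  | zero => simp [TW]
  | succ n ih =>
    have h21 : chainStep 2 * chainStep 1 = chainStep 1 * transvection 0 1 (-1) := by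
      simp [chainStep, transvection_zero_one]
    rw [TW_succ, List.cons_append, chainProd_cons, ih, ← Matrix.mul_assoc, h21, Matrix.mul_assoc,
      transvection_mul_transvection_same 0 1 (by decide)]
    congr 2
    push_cast
    ring

lemma Shrinks.exists_chainProd_eq_cons_TW_append_one {L : List ℤ} {c : ℤ} (h : Shrinks L [c, 1]) :
    ∃ (m : ℤ) (n : ℕ),
      chainProd L = transvection 1 0 m * chainProd (c :: TW n ++ [1]) ∧ (c = 1 → n = 0) := by
  obtain ⟨m, n, hmn⟩ := h.exists_chainProd_eq
  have hTW (n : ℕ) :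
      chainProd (c :: TW n ++ [1]) = chainProd [c, 1] * transvection 0 1 (-(n : ℤ)) := by
    rw [List.cons_append, chainProd_cons, chainProd_TW_append_one]
    simp [Matrix.mul_assoc]
  by_cases hc : c = 1
  · subst hc
    have h11 : chainProd [1, 1] * transvection 0 1 (-(n : ℤ))
        = transvection 1 0 (n : ℤ) * chainProd [1, 1] := by
      simp [chainStep, transvection_zero_one, transvection_one_zero]
    refine ⟨m + n, 0, ?_, fun _ => rfl⟩
    rw [hmn, hTW 0, Matrix.mul_assoc, h11, ← Matrix.mul_assoc,
      transvection_mul_transvection_same 1 0 (by decide)]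
    simp
  · exact ⟨m, n, by rw [hmn, hTW, Matrix.mul_assoc], fun h1 => absurd h1 hc⟩

lemma sprod_append_singleton_cons (X : List ℤ) (x y : ℤ) (Y : List ℤ) :
    sprod (X ++ [x]) (y :: Y) = X ++ (x + y - 1) :: Y := by
  simp [sprod]

lemma length_sprod {X Y : List ℤ} (hX : X ≠ []) (hY : Y ≠ []) :
    (sprod X Y).length + 1 = X.length + Y.length := by
  obtain ⟨X, x, rfl⟩ := (List.eq_nil_or_concat' X).resolve_left hX
  obtain ⟨y, Y, rfl⟩ := List.exists_cons_of_ne_nil hY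
  simp only [sprod_append_singleton_cons, List.length_append, List.length_cons, List.length_nil]
  omega

lemma chainProd_sprod {X Y : List ℤ} (hX : X ≠ []) (hY : Y ≠ []) :
    chainProd (sprod X Y) = -(chainProd X * chainStep 1 * chainStep 1 * chainProd Y) := by
  obtain ⟨X, x, rfl⟩ := (List.eq_nil_or_concat' X).resolve_left hX
  obtain ⟨y, Y, rfl⟩ := List.exists_cons_of_ne_nil hY
  have hxy : chainStep (x + y - 1) = -(chainStep x * chainStep 1 * chainStep 1 * chainStep y) := by
    simp only [chainStep, mul_fin_two, neg_of, neg_cons, neg_empty,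
      EmbeddingLike.apply_eq_iff_eq, vecCons_inj, and_true]
    exact ⟨⟨by ring, by ring⟩, by ring, by ring⟩
  rw [sprod_append_singleton_cons]
  simp only [chainProd_append, chainProd_cons, chainProd_nil, Matrix.mul_one, hxy]
  simp only [Matrix.mul_neg, Matrix.neg_mul, Matrix.mul_assoc]

lemma chainStep_one_pow_three : chainStep 1 ^ 3 = -1 := by
  ext i j
  fin_cases i <;> fin_cases j <;> simp [pow_succ, chainStep]

lemma admissible_sprod_cons_TW {c : ℤ} {n : ℕ} {B : List ℤ} (hc : 0 < c) (hn : c = 1 → n = 0)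
    (hB : Admissible B) : Admissible (sprod (c :: TW n) B) := by
  obtain ⟨b, T, rfl⟩ := List.exists_cons_of_ne_nil hB.1
  have hb := hB.2 b List.mem_cons_self
  refine ⟨by simp [sprod], ?_⟩
  cases n with
  | zero =>
    rw [show c :: TW 0 = [] ++ [c] from rfl, sprod_append_singleton_cons]
    simp only [List.nil_append, List.mem_cons]
    rintro a (rfl | ha)
    · omega
    · exact hB.2 a (List.mem_cons_of_mem b ha)
  | succ n =>
    rw [show c :: TW (n + 1) = (c :: TW n) ++ [2] by simp [TW, List.replicate_succ'],
      sprod_append_singleton_cons]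
    simp only [List.cons_append, List.mem_cons, List.mem_append]
    have hc2 : 2 ≤ c := by omega
    rintro a (rfl | ha | rfl | ha)
    · exact hc2
    · rw [List.eq_of_mem_replicate ha]
    · omega
    · exact hB.2 a (List.mem_cons_of_mem b ha)

lemma chainProd_sprod_append_one_append {X B B' : List ℤ}
    (hadj : chainProd (B' ++ 1 :: B) = chainProd [1, 1]) (hX : X ≠ []) (hB' : B' ≠ []) :
    chainProd (sprod X B' ++ 1 :: B) = chainProd (X ++ [1]) := by
  rw [chainProd_append] at hadj
  calc chainProd (sprod X B' ++ 1 :: B)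
      = -(chainProd X * chainStep 1 * chainStep 1 * (chainProd B' * chainProd (1 :: B))) := by
        rw [chainProd_append, chainProd_sprod hX hB']
        simp only [Matrix.neg_mul, Matrix.mul_assoc]
    _ = chainProd X * chainStep 1 * -chainStep 1 ^ 3 := by
        rw [hadj]
        simp [pow_succ, Matrix.mul_assoc]
    _ = chainProd (X ++ [1]) := by simp [chainStep_one_pow_three]

lemma eq_of_chainProd_append_eq {A C B : List ℤ} (hA : ∀ a ∈ A, 2 ≤ a) (hC : ∀ a ∈ C, 2 ≤ a)
    {m : ℤ} (h : chainProd (A ++ B) = transvection 1 0 m * chainProd (C ++ B)) : A = C := by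
  have hcancel (X : Matrix (Fin 2) (Fin 2) ℤ) : X * chainProd B * adjugate (chainProd B) = X := by
    rw [Matrix.mul_assoc, mul_adjugate, chainProd_det, one_smul, Matrix.mul_one]
  have hAC : chainProd A = transvection 1 0 m * chainProd C := by
    rw [← hcancel (chainProd A), ← hcancel (transvection 1 0 m * chainProd C), ← chainProd_append,
      h, chainProd_append]
    simp only [Matrix.mul_assoc]
  refine eq_of_chainProd_row_eq hA hC (funext fun j => ?_)
  rw [hAC, transvection_mul_apply_of_ne _ _ _ _ (by decide)]

/-- Lemma 2.5 (i): let `A`, `B` be admissible linear chains, `c` a positive integer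
and `B' = B*`. If `[A,1,B]` shrinks to `[c,1]`, then `n := r(A) − r(B*) ≥ 0` and
`A = [c, TWₙ] ∗ B*`; moreover `n = 0` if `c = 1`. -/
theorem shrinks_to_c_one (A B B' : List ℤ) (c : ℤ) (hc : 0 < c)
    (hA : Admissible A) (hB : Admissible B) (hB' : Admissible B')
    (hadj : inductance B' = 1 - inductance B.reverse)
    (h : Shrinks (A ++ 1 :: B) [c, 1]) :
    B'.length ≤ A.length ∧
    A = sprod (c :: TW (A.length - B'.length)) B' ∧
    (c = 1 → A.length = B'.length) := by
  obtain ⟨m, n, hm, hn⟩ := h.exists_chainProd_eq_cons_TW_append_one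
  have hAC : A = sprod (c :: TW n) B' := by
    refine eq_of_chainProd_append_eq hA.2 (admissible_sprod_cons_TW hc hn hB').2
      (B := 1 :: B) (m := m) ?_
    rw [hm, chainProd_sprod_append_one_append (chainProd_append_one_append_of_adjoint hB hB' hadj)
      (List.cons_ne_nil _ _) hB'.1]
  have hlen : A.length = n + B'.length := by
    have hX : (c :: TW n).length = n + 1 := by simp [TW]
    have := length_sprod (List.cons_ne_nil c (TW n)) hB'.1
    rw [hAC]
    omega
  refine ⟨by omega, ?_, fun h1 => by simp [hlen, hn h1]⟩
  rwa [show A.length - B'.length = n by omega]
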